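/- Let A, Y, S be binary, and Z, W, U finite-valued random variables on a discrete probability space, all conditioning events having positive probability. Assume: (i) Z ⊥ (Y, S) | (A, U); (ii) W ⊥ (A, Z, S) | (U, Y); (iii) q̃: {0,1} × range(Z) → ℝ satisfies E[q̃(a, Z) | A=a, U=u] = 1/P(A=a | U=u, Y=0, S=1) for all a, u. Then for all a, w: E[q̃(a, Z) | A=a, W=w, Y=0, S=1] = 1 / P(A=a | W=w, Y=0, S=1). -/
import Mathlib


open scoped BigOperators
open Real

attribute [local instance] Classical.propDecidable

noncomputable section

variable {Ω : Type*}

/-- Probability of an event under weight function `P` on a finite sample space. -/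
def pr [Fintype Ω] (P : Ω → ℝ) (E : Ω → Prop) : ℝ :=
  ∑ ω, if E ω then P ω else 0

/-- Conditional probability `P(E | F)`. -/
def cpr [Fintype Ω] (P : Ω → ℝ) (E F : Ω → Prop) : ℝ :=
  pr P (fun ω => E ω ∧ F ω) / pr P F

/-- Conditional expectation `E[f | F]`. -/
def cexp [Fintype Ω] (P : Ω → ℝ) (f : Ω → ℝ) (F : Ω → Prop) : ℝ :=
  (∑ ω, if F ω then f ω * P ω else 0) / pr P F

/-- Conditional independence `f ⊥ g | h` under `P`. -/
def CondIndep [Fintype Ω] (P : Ω → ℝ) {α β γ : Type*}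
    (f : Ω → α) (g : Ω → β) (h : Ω → γ) : Prop :=
  ∀ a b c, pr P (fun ω => h ω = c) ≠ 0 →
    cpr P (fun ω => f ω = a ∧ g ω = b) (fun ω => h ω = c) =
      cpr P (fun ω => f ω = a) (fun ω => h ω = c) *
        cpr P (fun ω => g ω = b) (fun ω => h ω = c)


/-- Unnormalized weighted sum over an event. -/
def ws [Fintype Ω] (P : Ω → ℝ) (g : Ω → ℝ) (E : Ω → Prop) : ℝ :=
  ∑ ω, if E ω then g ω * P ω else 0

lemma cexp_eq_ws_div [Fintype Ω] (P : Ω → ℝ) (g : Ω → ℝ) (E : Ω → Prop) :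
    cexp P g E = ws P g E / pr P E := rfl

lemma pr_congr [Fintype Ω] (P : Ω → ℝ) {E F : Ω → Prop} (h : ∀ ω, E ω ↔ F ω) :
    pr P E = pr P F := by
  unfold pr
  exact Finset.sum_congr rfl fun ω _ => by rw [if_congr (h ω) rfl rfl]

lemma ws_congr [Fintype Ω] (P : Ω → ℝ) (g : Ω → ℝ) {E F : Ω → Prop}
    (h : ∀ ω, E ω ↔ F ω) : ws P g E = ws P g F := by
  unfold ws
  exact Finset.sum_congr rfl fun ω _ => by rw [if_congr (h ω) rfl rfl]

lemma pr_nonneg [Fintype Ω] {P : Ω → ℝ} (hP : ∀ ω, 0 ≤ P ω) (E : Ω → Prop) :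
    0 ≤ pr P E :=
  Finset.sum_nonneg fun ω _ => by by_cases h : E ω <;> simp [h, hP ω]

lemma pr_eq_zero [Fintype Ω] {P : Ω → ℝ} (hP : ∀ ω, 0 ≤ P ω) {E F : Ω → Prop}
    (hEF : ∀ ω, E ω → F ω) (hF : pr P F = 0) : pr P E = 0 := by
  have hmono : pr P E ≤ pr P F := by
    apply Finset.sum_le_sum
    intro ω _
    by_cases h : E ω
    · simp [h, hEF ω h]
    · by_cases h2 : F ω <;> simp [h, h2, hP ω]
  exact le_antisymm (hF ▸ hmono) (pr_nonneg hP E)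

lemma ws_split [Fintype Ω] {V : Type*} [Fintype V] (P : Ω → ℝ) (g : Ω → ℝ)
    (E : Ω → Prop) (f : Ω → V) :
    ws P g E = ∑ v, ws P g (fun ω => E ω ∧ f ω = v) := by
  unfold ws
  rw [Finset.sum_comm]
  refine Finset.sum_congr rfl fun ω _ => ?_
  by_cases h : E ω <;> simp [h]

lemma pr_split [Fintype Ω] {V : Type*} [Fintype V] (P : Ω → ℝ)
    (E : Ω → Prop) (f : Ω → V) :
    pr P E = ∑ v, pr P (fun ω => E ω ∧ f ω = v) := by
  unfold pr
  rw [Finset.sum_comm]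
  refine Finset.sum_congr rfl fun ω _ => ?_
  by_cases h : E ω <;> simp [h]

lemma pr_split_bin [Fintype Ω] (P : Ω → ℝ) (E : Ω → Prop) (A : Ω → ℕ)
    (hA : ∀ ω, A ω = 0 ∨ A ω = 1) :
    pr P E = pr P (fun ω => E ω ∧ A ω = 0) + pr P (fun ω => E ω ∧ A ω = 1) := by
  unfold pr
  rw [← Finset.sum_add_distrib]
  refine Finset.sum_congr rfl fun ω _ => ?_
  rcases hA ω with h | h <;> by_cases hE : E ω <;> simp [h, hE]

lemma ws_const [Fintype Ω] (P : Ω → ℝ) (g : Ω → ℝ) (E : Ω → Prop) (c : ℝ)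
    (hc : ∀ ω, E ω → g ω = c) : ws P g E = c * pr P E := by
  unfold ws pr
  rw [Finset.mul_sum]
  refine Finset.sum_congr rfl fun ω _ => ?_
  by_cases h : E ω
  · simp [h, hc ω h]
  · simp [h]

lemma pr_and_eq_cpr_mul [Fintype Ω] (P : Ω → ℝ) (E F : Ω → Prop)
    (hF : pr P F ≠ 0) :
    pr P (fun ω => E ω ∧ F ω) = cpr P E F * pr P F := by
  rw [cpr, div_mul_cancel₀ _ hF]

lemma condIndep_factor [Fintype Ω] {α β γ : Type*} {P : Ω → ℝ}
    (hP : ∀ ω, 0 ≤ P ω) {f : Ω → α} {g : Ω → β} {h : Ω → γ}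
    (hI : CondIndep P f g h) (a : α) (b : β) (c : γ) :
    pr P (fun ω => f ω = a ∧ g ω = b ∧ h ω = c) =
      cpr P (fun ω => f ω = a) (fun ω => h ω = c) *
        pr P (fun ω => g ω = b ∧ h ω = c) := by
  by_cases hc : pr P (fun ω => h ω = c) = 0
  · rw [pr_eq_zero hP (fun ω hw => hw.2.2) hc,
      pr_eq_zero hP (fun ω hw => hw.2) hc, mul_zero]
  · have key := hI a b c hc
    have h1 : pr P (fun ω => (f ω = a ∧ g ω = b) ∧ h ω = c) =
        cpr P (fun ω => f ω = a ∧ g ω = b) (fun ω => h ω = c) *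
          pr P (fun ω => h ω = c) := pr_and_eq_cpr_mul P _ _ hc
    rw [pr_congr P (show ∀ ω, (f ω = a ∧ g ω = b ∧ h ω = c) ↔
        ((f ω = a ∧ g ω = b) ∧ h ω = c) from fun ω => by tauto), h1, key,
      mul_assoc, ← pr_and_eq_cpr_mul P _ _ hc]

/-- Theorem 2': exact identification of the alternative
treatment confounding bridge function under treatment-induced selection. -/
theorem stmt13 [Fintype Ω] {𝒵 𝒲 𝒰 : Type*} [Fintype 𝒵] [Fintype 𝒲] [Fintype 𝒰]
    (P : Ω → ℝ) (hP : ∀ ω, 0 ≤ P ω) (hPsum : ∑ ω, P ω = 1)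
    (A Y S : Ω → ℕ) (Z : Ω → 𝒵) (W : Ω → 𝒲) (U : Ω → 𝒰)
    (hA : ∀ ω, A ω = 0 ∨ A ω = 1) (hY : ∀ ω, Y ω = 0 ∨ Y ω = 1)
    (hS : ∀ ω, S ω = 0 ∨ S ω = 1)
    (hpos : ∀ (a : ℕ) (w : 𝒲) (u : 𝒰), (a = 0 ∨ a = 1) →
      pr P (fun ω => A ω = a ∧ U ω = u) ≠ 0 ∧
      pr P (fun ω => A ω = a ∧ W ω = w ∧ Y ω = 0 ∧ S ω = 1) ≠ 0 ∧
      pr P (fun ω => U ω = u ∧ Y ω = 0 ∧ S ω = 1) ≠ 0 ∧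
      cpr P (fun ω => A ω = a) (fun ω => U ω = u ∧ Y ω = 0 ∧ S ω = 1) ≠ 0)
    -- (i) Z ⊥ (Y, S) | (A, U)
    (hZ : CondIndep P Z (fun ω => (Y ω, S ω)) (fun ω => (A ω, U ω)))
    -- (ii) W ⊥ (A, Z, S) | (U, Y)
    (hW : CondIndep P W (fun ω => (A ω, Z ω, S ω)) (fun ω => (U ω, Y ω)))
    -- (iii) alternative treatment confounding bridge function
    (qt : ℕ → 𝒵 → ℝ)
    (hqt : ∀ (a : ℕ) (u : 𝒰), (a = 0 ∨ a = 1) →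
      cexp P (fun ω => qt a (Z ω)) (fun ω => A ω = a ∧ U ω = u) =
        (cpr P (fun ω => A ω = a) (fun ω => U ω = u ∧ Y ω = 0 ∧ S ω = 1))⁻¹) :
    ∀ (a : ℕ) (w : 𝒲), (a = 0 ∨ a = 1) →
      cexp P (fun ω => qt a (Z ω))
          (fun ω => A ω = a ∧ W ω = w ∧ Y ω = 0 ∧ S ω = 1) =
        (cpr P (fun ω => A ω = a) (fun ω => W ω = w ∧ Y ω = 0 ∧ S ω = 1))⁻¹ := by
  intro a w ha
  -- Step A: W-independence marginalized over Z
  have margW : ∀ (u : 𝒰) (a' : ℕ),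
      pr P (fun ω => (W ω = w ∧ A ω = a' ∧ S ω = 1) ∧ U ω = u ∧ Y ω = 0) =
        cpr P (fun ω => W ω = w) (fun ω => (U ω, Y ω) = (u, 0)) *
          pr P (fun ω => (A ω = a' ∧ S ω = 1) ∧ U ω = u ∧ Y ω = 0) := by
    intro u a'
    rw [pr_split P (fun ω => (W ω = w ∧ A ω = a' ∧ S ω = 1) ∧ U ω = u ∧ Y ω = 0) Z,
        pr_split P (fun ω => (A ω = a' ∧ S ω = 1) ∧ U ω = u ∧ Y ω = 0) Z,
        Finset.mul_sum]
    refine Finset.sum_congr rfl fun z _ => ?_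
    calc pr P (fun ω => ((W ω = w ∧ A ω = a' ∧ S ω = 1) ∧ U ω = u ∧ Y ω = 0) ∧ Z ω = z)
        = pr P (fun ω => W ω = w ∧ (A ω, Z ω, S ω) = (a', z, 1) ∧ (U ω, Y ω) = (u, 0)) :=
          pr_congr P fun ω => by simp only [Prod.mk.injEq]; tauto
      _ = cpr P (fun ω => W ω = w) (fun ω => (U ω, Y ω) = (u, 0)) *
            pr P (fun ω => (A ω, Z ω, S ω) = (a', z, 1) ∧ (U ω, Y ω) = (u, 0)) :=
          condIndep_factor hP hW w (a', z, 1) (u, 0)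
      _ = cpr P (fun ω => W ω = w) (fun ω => (U ω, Y ω) = (u, 0)) *
            pr P (fun ω => ((A ω = a' ∧ S ω = 1) ∧ U ω = u ∧ Y ω = 0) ∧ Z ω = z) := by
          rw [pr_congr P (show ∀ ω,
            ((A ω, Z ω, S ω) = (a', z, 1) ∧ (U ω, Y ω) = (u, 0)) ↔
            (((A ω = a' ∧ S ω = 1) ∧ U ω = u ∧ Y ω = 0) ∧ Z ω = z) from
            fun ω => by simp only [Prod.mk.injEq]; tauto)]
  -- Step B: the numerator restricted to U = u
  have Nu : ∀ u : 𝒰,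
      ws P (fun ω => qt a (Z ω))
        (fun ω => (A ω = a ∧ W ω = w ∧ Y ω = 0 ∧ S ω = 1) ∧ U ω = u) =
      cpr P (fun ω => W ω = w) (fun ω => (U ω, Y ω) = (u, 0)) *
        pr P (fun ω => U ω = u ∧ Y ω = 0 ∧ S ω = 1) := by
    intro u
    obtain ⟨hAU, -, hUYS, hcA⟩ := hpos a w u ha
    have hAUpair : pr P (fun ω => (A ω, U ω) = (a, u)) =
        pr P (fun ω => A ω = a ∧ U ω = u) :=
      pr_congr P fun ω => by simp only [Prod.mk.injEq]
    have TT : ∑ z, qt a z * pr P (fun ω => Z ω = z ∧ (A ω, U ω) = (a, u)) =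
        (cpr P (fun ω => A ω = a) (fun ω => U ω = u ∧ Y ω = 0 ∧ S ω = 1))⁻¹ *
          pr P (fun ω => A ω = a ∧ U ω = u) := by
      have e1 : ws P (fun ω => qt a (Z ω)) (fun ω => A ω = a ∧ U ω = u) =
          ∑ z, qt a z * pr P (fun ω => Z ω = z ∧ (A ω, U ω) = (a, u)) := by
        rw [ws_split P _ _ Z]
        refine Finset.sum_congr rfl fun z _ => ?_
        rw [ws_const P _ _ (qt a z) (fun ω h => by rw [h.2]),
            pr_congr P (show ∀ ω, ((A ω = a ∧ U ω = u) ∧ Z ω = z) ↔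
              (Z ω = z ∧ (A ω, U ω) = (a, u)) from
              fun ω => by simp only [Prod.mk.injEq]; tauto)]
      rw [← e1, ← hqt a u ha, cexp_eq_ws_div]
      exact (div_mul_cancel₀ _ hAU).symm
    have hC : pr P (fun ω => (Y ω, S ω) = (0, 1) ∧ (A ω, U ω) = (a, u)) =
        cpr P (fun ω => A ω = a) (fun ω => U ω = u ∧ Y ω = 0 ∧ S ω = 1) *
          pr P (fun ω => U ω = u ∧ Y ω = 0 ∧ S ω = 1) := by
      have h2 := pr_and_eq_cpr_mul P (fun ω => A ω = a)
        (fun ω => U ω = u ∧ Y ω = 0 ∧ S ω = 1) hUYS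
      rw [← h2]
      exact pr_congr P fun ω => by simp only [Prod.mk.injEq]; tauto
    have step : ∀ z : 𝒵,
        ws P (fun ω => qt a (Z ω))
          (fun ω => ((A ω = a ∧ W ω = w ∧ Y ω = 0 ∧ S ω = 1) ∧ U ω = u) ∧ Z ω = z) =
        cpr P (fun ω => W ω = w) (fun ω => (U ω, Y ω) = (u, 0)) *
          (pr P (fun ω => (Y ω, S ω) = (0, 1) ∧ (A ω, U ω) = (a, u)) /
            pr P (fun ω => (A ω, U ω) = (a, u))) *
          (qt a z * pr P (fun ω => Z ω = z ∧ (A ω, U ω) = (a, u))) := by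
      intro z
      rw [ws_const P _ _ (qt a z) (fun ω h => by rw [h.2])]
      have c1 : pr P (fun ω =>
          ((A ω = a ∧ W ω = w ∧ Y ω = 0 ∧ S ω = 1) ∧ U ω = u) ∧ Z ω = z) =
          pr P (fun ω => W ω = w ∧ (A ω, Z ω, S ω) = (a, z, 1) ∧ (U ω, Y ω) = (u, 0)) :=
        pr_congr P fun ω => by simp only [Prod.mk.injEq]; tauto
      have c2 : pr P (fun ω => (A ω, Z ω, S ω) = (a, z, 1) ∧ (U ω, Y ω) = (u, 0)) =
          pr P (fun ω => Z ω = z ∧ (Y ω, S ω) = (0, 1) ∧ (A ω, U ω) = (a, u)) :=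
        pr_congr P fun ω => by simp only [Prod.mk.injEq]; tauto
      rw [c1, condIndep_factor hP hW w (a, z, 1) (u, 0), c2,
          condIndep_factor hP hZ z (0, 1) (a, u)]
      simp only [cpr]
      ring
    calc ws P (fun ω => qt a (Z ω))
          (fun ω => (A ω = a ∧ W ω = w ∧ Y ω = 0 ∧ S ω = 1) ∧ U ω = u)
        = ∑ z, ws P (fun ω => qt a (Z ω))
            (fun ω => ((A ω = a ∧ W ω = w ∧ Y ω = 0 ∧ S ω = 1) ∧ U ω = u) ∧ Z ω = z) :=
          ws_split P _ _ Z
      _ = ∑ z, cpr P (fun ω => W ω = w) (fun ω => (U ω, Y ω) = (u, 0)) *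
            (pr P (fun ω => (Y ω, S ω) = (0, 1) ∧ (A ω, U ω) = (a, u)) /
              pr P (fun ω => (A ω, U ω) = (a, u))) *
            (qt a z * pr P (fun ω => Z ω = z ∧ (A ω, U ω) = (a, u))) :=
          Finset.sum_congr rfl fun z _ => step z
      _ = cpr P (fun ω => W ω = w) (fun ω => (U ω, Y ω) = (u, 0)) *
            (pr P (fun ω => (Y ω, S ω) = (0, 1) ∧ (A ω, U ω) = (a, u)) /
              pr P (fun ω => (A ω, U ω) = (a, u))) *
            ∑ z, qt a z * pr P (fun ω => Z ω = z ∧ (A ω, U ω) = (a, u)) := by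
          rw [← Finset.mul_sum]
      _ = cpr P (fun ω => W ω = w) (fun ω => (U ω, Y ω) = (u, 0)) *
            pr P (fun ω => U ω = u ∧ Y ω = 0 ∧ S ω = 1) := by
          rw [TT, hC, hAUpair]
          field_simp
  -- Step C: the target probability restricted to U = u
  have Mu : ∀ u : 𝒰,
      pr P (fun ω => (W ω = w ∧ Y ω = 0 ∧ S ω = 1) ∧ U ω = u) =
        cpr P (fun ω => W ω = w) (fun ω => (U ω, Y ω) = (u, 0)) *
          pr P (fun ω => U ω = u ∧ Y ω = 0 ∧ S ω = 1) := by
    intro u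
    have f : ∀ a' : ℕ,
        pr P (fun ω => ((W ω = w ∧ S ω = 1) ∧ U ω = u ∧ Y ω = 0) ∧ A ω = a') =
        cpr P (fun ω => W ω = w) (fun ω => (U ω, Y ω) = (u, 0)) *
          pr P (fun ω => (S ω = 1 ∧ U ω = u ∧ Y ω = 0) ∧ A ω = a') := by
      intro a'
      rw [pr_congr P (show ∀ ω,
          (((W ω = w ∧ S ω = 1) ∧ U ω = u ∧ Y ω = 0) ∧ A ω = a') ↔
          ((W ω = w ∧ A ω = a' ∧ S ω = 1) ∧ U ω = u ∧ Y ω = 0) from fun ω => by tauto),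
        margW u a',
        pr_congr P (show ∀ ω,
          ((A ω = a' ∧ S ω = 1) ∧ U ω = u ∧ Y ω = 0) ↔
          ((S ω = 1 ∧ U ω = u ∧ Y ω = 0) ∧ A ω = a') from fun ω => by tauto)]
    have e0 : pr P (fun ω => (W ω = w ∧ Y ω = 0 ∧ S ω = 1) ∧ U ω = u) =
        pr P (fun ω => ((W ω = w ∧ S ω = 1) ∧ U ω = u ∧ Y ω = 0) ∧ A ω = 0) +
        pr P (fun ω => ((W ω = w ∧ S ω = 1) ∧ U ω = u ∧ Y ω = 0) ∧ A ω = 1) := by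
      rw [pr_congr P (show ∀ ω, ((W ω = w ∧ Y ω = 0 ∧ S ω = 1) ∧ U ω = u) ↔
          ((W ω = w ∧ S ω = 1) ∧ U ω = u ∧ Y ω = 0) from fun ω => by tauto)]
      exact pr_split_bin P _ A hA
    have e1 : pr P (fun ω => U ω = u ∧ Y ω = 0 ∧ S ω = 1) =
        pr P (fun ω => (S ω = 1 ∧ U ω = u ∧ Y ω = 0) ∧ A ω = 0) +
        pr P (fun ω => (S ω = 1 ∧ U ω = u ∧ Y ω = 0) ∧ A ω = 1) := by
      rw [pr_congr P (show ∀ ω, (U ω = u ∧ Y ω = 0 ∧ S ω = 1) ↔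
          (S ω = 1 ∧ U ω = u ∧ Y ω = 0) from fun ω => by tauto)]
      exact pr_split_bin P _ A hA
    rw [e0, e1, f 0, f 1, mul_add]
  -- Conclusion
  have key : ws P (fun ω => qt a (Z ω))
      (fun ω => A ω = a ∧ W ω = w ∧ Y ω = 0 ∧ S ω = 1) =
      pr P (fun ω => W ω = w ∧ Y ω = 0 ∧ S ω = 1) := by
    rw [ws_split P _ _ U, pr_split P _ U]
    exact Finset.sum_congr rfl fun u _ => by rw [Nu u, Mu u]
  rw [cexp_eq_ws_div, key, cpr, inv_div]
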